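/- The function s ↦ s·(e^{β₁ s}+1)/(e^{β₁ s}−1) is pointwise less than or equal to s ↦ s·(e^{β₂ s}+1)/(e^{β₂ s}−1) for all real s whenever β₁ ≥ β₂ > 0 (with values 2/β₁ and 2/β₂ at s = 0). In particular, K_{β₁,μ}(p) ≤ K_{β₂,μ}(p) for all p ∈ ℝ³ when β₁ ≥ β₂. -/
import Mathlib


open Real

/-- `h_β(s) = s(e^{βs}+1)/(e^{βs}−1)` for `s ≠ 0`, `h_β(0) = 2/β`. -/
noncomputable def hFun (β s : ℝ) : ℝ :=
  if s = 0 then 2 / β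
  else s * (Real.exp (β * s) + 1) / (Real.exp (β * s) - 1)

/-- `K_{β,μ}(p) = h_β(p²−μ)`. -/
noncomputable def Kfun (β μ : ℝ) (p : EuclideanSpace ℝ (Fin 3)) : ℝ :=
  hFun β (‖p‖ ^ 2 - μ)

theorem hFun_antitone_in_beta (β₁ β₂ : ℝ) (h₂ : 0 < β₂) (h₁₂ : β₂ ≤ β₁) :
    (∀ s : ℝ, hFun β₁ s ≤ hFun β₂ s) ∧
    ∀ (μ : ℝ) (p : EuclideanSpace ℝ (Fin 3)), Kfun β₁ μ p ≤ Kfun β₂ μ p := by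
  have h₁ : 0 < β₁ := lt_of_lt_of_le h₂ h₁₂
  have main : ∀ s : ℝ, hFun β₁ s ≤ hFun β₂ s := by
    intro s
    unfold hFun
    split_ifs with hs
    · gcongr
    · set A := Real.exp (β₁ * s) with hA
      set B := Real.exp (β₂ * s) with hB
      rcases lt_or_gt_of_ne hs with hneg | hpos
      · -- s < 0 : β₁ s ≤ β₂ s < 0, so A ≤ B < 1
        have hAB : A ≤ B := Real.exp_le_exp.2 (by nlinarith)
        have hB1 : B < 1 := by
          rw [hB, ← Real.exp_zero]
          exact Real.exp_lt_exp.2 (by nlinarith)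
        have hA1 : A < 1 := lt_of_le_of_lt hAB hB1
        have hApos : 0 < A := Real.exp_pos _
        have hBpos : 0 < B := Real.exp_pos _
        rw [show s * (A + 1) / (A - 1) = (-(s * (A + 1))) / (1 - A) by
              rw [div_eq_div_iff (by linarith) (by linarith)]; ring,
            show s * (B + 1) / (B - 1) = (-(s * (B + 1))) / (1 - B) by
              rw [div_eq_div_iff (by linarith) (by linarith)]; ring,
            div_le_div_iff₀ (by linarith) (by linarith)]
        nlinarith [mul_nonneg (le_of_lt (neg_pos.2 hneg)) (sub_nonneg.2 hAB)]
      · -- s > 0 : 1 < B ≤ A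
        have hAB : B ≤ A := Real.exp_le_exp.2 (by nlinarith)
        have hB1 : 1 < B := by
          rw [hB, ← Real.exp_zero]
          exact Real.exp_lt_exp.2 (by nlinarith)
        have hA1 : 1 < A := lt_of_lt_of_le hB1 hAB
        rw [div_le_div_iff₀ (by linarith) (by linarith)]
        nlinarith [mul_nonneg (le_of_lt hpos) (sub_nonneg.2 hAB)]
  exact ⟨main, fun μ p => main _⟩
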